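/- Let 𝔤 be a two-step nilpotent real Lie algebra, l ∈ 𝔤*, and let ad*(X)·l denote the functional Y ↦ l([Y,X]). Then the coadjoint orbit of l under the simply connected group G = exp 𝔤, given by (exp X)·l = l ∘ Ad(exp(-X)), equals the affine subspace l + 𝔤(l)^⊥, where 𝔤(l)^⊥ = {f ∈ 𝔤* : f vanishes on 𝔤(l)} and 𝔤(l) is the radical of the form B_l(X,Y) = l([X,Y]). -/

import Mathlib

/-!
Since `[𝔤, [𝔤, 𝔤]] = 0`, the coadjoint action collapses to `(exp X) · l = l + B_l(-X, ·)` with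
`B_l(X, Y) = l ⁅X, Y⁆`, so the orbit of `l` is `l + range B_l`. For any alternating form on a
finite-dimensional space, `range B = range Bᵀ` is the annihilator of the radical `ker B`.
-/

open LinearMap Module

theorem LinearMap.IsAlt.range_eq_dualAnnihilator_ker {K V : Type*} [Field K] [AddCommGroup V]
    [Module K V] [IsReflexive K V] {B : V →ₗ[K] V →ₗ[K] K} (hB : B.IsAlt) :
    range B = (ker B).dualAnnihilator := by
  have hflip : B.flip = -B := by
    ext x y
    exact (hB.neg x y).symm
  rw [dualAnnihilator_ker_eq_range_flip, hflip, range_neg]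

namespace LieAlgebra

variable {R L : Type*} [CommRing R] [LieRing L] [LieAlgebra R L]

def bracketForm (l : Dual R L) : L →ₗ[R] L →ₗ[R] R :=
  (ad R L : L →ₗ[R] Module.End R L).compr₂ l

@[simp]
theorem bracketForm_apply (l : Dual R L) (X Y : L) : bracketForm l X Y = l ⁅X, Y⁆ :=
  rfl

theorem bracketForm_isAlt (l : Dual R L) : (bracketForm l).IsAlt := fun X => by
  simp

theorem mem_ker_bracketForm {l : Dual R L} {X : L} :
    X ∈ ker (bracketForm l) ↔ ∀ Y, l ⁅X, Y⁆ = 0 := by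
  simp [LinearMap.ext_iff]

theorem apply_add_lie_add_smul_lie_lie (h2 : ∀ x y z : L, ⁅x, ⁅y, z⁆⁆ = 0) (l : Dual R L)
    (c : R) (X Y : L) : l (Y + ⁅X, Y⁆ + c • ⁅X, ⁅X, Y⁆⁆) = l Y + bracketForm l X Y := by
  simp [h2]

end LieAlgebra

open LieAlgebra

/-- The coadjoint orbit of `l` for a two-step nilpotent Lie algebra equals
`l + 𝔤(l)^⊥`.  Since `[𝔤,[𝔤,𝔤]] = 0`, `Ad(exp X) = id + ad X + (1/2)(ad X)²`,
so `Ad*(exp X) l` sends `Y` to `l (Y + ⁅-X, Y⁆ + (1/2) • ⁅-X, ⁅-X, Y⁆⁆)`. -/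
theorem stmt_8 (L : Type*) [LieRing L] [LieAlgebra ℝ L] [FiniteDimensional ℝ L]
    (h2 : ∀ x y z : L, ⁅x, ⁅y, z⁆⁆ = 0)
    (l : Module.Dual ℝ L) :
    {f : Module.Dual ℝ L | ∃ X : L, ∀ Y : L,
        f Y = l (Y + ⁅-X, Y⁆ + (1/2 : ℝ) • ⁅-X, ⁅-X, Y⁆⁆)} =
    {f : Module.Dual ℝ L | ∀ Z : L, (∀ Y : L, l ⁅Z, Y⁆ = 0) → f Z = l Z} := by
  ext f
  simp only [apply_add_lie_add_smul_lie_lie h2, Set.mem_ofPred_eq]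
  calc (∃ X : L, ∀ Y, f Y = l Y + bracketForm l (-X) Y)
      ↔ f - l ∈ range (bracketForm l) := by
        constructor
        · rintro ⟨X, hX⟩
          exact ⟨-X, LinearMap.ext fun Y => by simp [hX]⟩
        · rintro ⟨X, hX⟩
          refine ⟨-X, fun Y => ?_⟩
          rw [neg_neg, hX]
          simp
    _ ↔ f - l ∈ (ker (bracketForm l)).dualAnnihilator := by
        rw [(bracketForm_isAlt l).range_eq_dualAnnihilator_ker]
    _ ↔ ∀ Z : L, (∀ Y : L, l ⁅Z, Y⁆ = 0) → f Z = l Z := by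
        simp only [Submodule.mem_dualAnnihilator, mem_ker_bracketForm, LinearMap.sub_apply, sub_eq_zero]
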